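/- For integers n, m, r ≥ 1 with n ≥ r^(2m-1) and r ≥ m, the quantity (1 - ((r^(2m) - 1)/r^(2m))^n)^m is at least (1/r^m)(1 - m/(2r)). -/

import Mathlib

/-!
With `R = r ^ (2m)`, a fixed box misses all `n ≥ R / r` points of one sample with probability
`(1 - 1/R) ^ n ≤ exp (-n/R) ≤ exp (-1/r) ≤ 1 - 1/r + 1/(2r²)`, so it is hit with probability at
least `(1/r)(1 - 1/(2r))`. Raising this to the power `m` and applying Bernoulli's inequality to
`(1 - 1/(2r)) ^ m` gives the bound.
-/

open Real

lemma one_sub_pow_le_exp_neg_mul {x : ℝ} (hx : x ≤ 1) (n : ℕ) :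
    (1 - x) ^ n ≤ exp (-(n * x)) :=
  calc (1 - x) ^ n ≤ exp (-x) ^ n := by
        gcongr
        exact one_sub_le_exp_neg x
    _ = exp (-(n * x)) := by rw [← exp_nat_mul, mul_neg]

lemma exp_neg_le_one_sub_add_sq_div_two {x : ℝ} (hx : 0 ≤ x) :
    exp (-x) ≤ 1 - x + x ^ 2 / 2 := by
  rw [exp_neg, inv_le_iff_one_le_mul₀ (exp_pos x)]
  have hpos : 0 ≤ 1 - x + x ^ 2 / 2 := by nlinarith [sq_nonneg (x - 1)]
  -- the two quadratic Taylor polynomials of `exp (∓x)` multiply to `1 + x ^ 4 / 4`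
  calc (1 : ℝ) ≤ (1 - x + x ^ 2 / 2) * (1 + x + x ^ 2 / 2) := by nlinarith [pow_nonneg hx 4]
    _ ≤ (1 - x + x ^ 2 / 2) * exp x := by gcongr; exact quadratic_le_exp_of_nonneg hx

lemma one_sub_inv_pow_le_one_sub_add_sq_div_two {R t : ℝ} {n : ℕ} (hR : 1 ≤ R) (ht : 0 ≤ t)
    (hn : t * R ≤ n) : (1 - R⁻¹) ^ n ≤ 1 - t + t ^ 2 / 2 := by
  have hR₀ : 0 < R := by linarith
  have ht_le : t ≤ n * R⁻¹ := by rwa [← div_eq_mul_inv, le_div_iff₀ hR₀]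
  calc (1 - R⁻¹) ^ n ≤ exp (-(n * R⁻¹)) := one_sub_pow_le_exp_neg_mul (inv_le_one_of_one_le₀ hR) n
    _ ≤ exp (-t) := by gcongr
    _ ≤ 1 - t + t ^ 2 / 2 := exp_neg_le_one_sub_add_sq_div_two ht

lemma pow_mul_one_sub_le_pow {t p : ℝ} (m : ℕ) (ht₀ : 0 ≤ t) (ht₂ : t ≤ 2)
    (hp : t - t ^ 2 / 2 ≤ p) : t ^ m * (1 - m * t / 2) ≤ p ^ m := by
  have hbernoulli : 1 - m * t / 2 ≤ (1 - t / 2) ^ m :=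
    calc 1 - m * t / 2 = 1 + m * -(t / 2) := by ring
      _ ≤ (1 + -(t / 2)) ^ m := one_add_mul_le_pow (by linarith) m
      _ = (1 - t / 2) ^ m := by rw [← sub_eq_add_neg]
  calc t ^ m * (1 - m * t / 2) ≤ t ^ m * (1 - t / 2) ^ m := by gcongr
    _ = (t - t ^ 2 / 2) ^ m := by rw [← mul_pow]; ring
    _ ≤ p ^ m := pow_le_pow_left₀ (by nlinarith) hp m

theorem full_box_prob_lower_bound_general (n m r : ℕ) (hr : 1 ≤ r)
    (hnr : (r : ℝ) ^ (2 * m - 1) ≤ n) :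
    (1 - (((r : ℝ) ^ (2 * m) - 1) / (r : ℝ) ^ (2 * m)) ^ n) ^ m ≥
      (1 / (r : ℝ) ^ m) * (1 - m / (2 * r)) := by
  have hr₁ : (1 : ℝ) ≤ r := by exact_mod_cast hr
  have hR : (1 : ℝ) ≤ r ^ (2 * m) := one_le_pow₀ hr₁
  have hn : (r : ℝ)⁻¹ * r ^ (2 * m) ≤ n := by
    calc (r : ℝ)⁻¹ * r ^ (2 * m) ≤ (r : ℝ)⁻¹ * r ^ (2 * m - 1 + 1) := by
          gcongr
          omega
      _ = r ^ (2 * m - 1) := by rw [pow_succ, mul_comm, mul_inv_cancel_right₀ (by positivity)]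
      _ ≤ n := hnr
  have hhit : (r : ℝ)⁻¹ - (r : ℝ)⁻¹ ^ 2 / 2 ≤ 1 - (1 - ((r : ℝ) ^ (2 * m))⁻¹) ^ n := by
    linarith [one_sub_inv_pow_le_one_sub_add_sq_div_two hR (by positivity) hn]
  calc (1 / (r : ℝ) ^ m) * (1 - m / (2 * r)) = (r : ℝ)⁻¹ ^ m * (1 - m * (r : ℝ)⁻¹ / 2) := by
        rw [inv_pow]
        field_simp
    _ ≤ (1 - (1 - ((r : ℝ) ^ (2 * m))⁻¹) ^ n) ^ m :=
        pow_mul_one_sub_le_pow m (by positivity) (by linarith [inv_le_one_of_one_le₀ hr₁]) hhit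
    _ = (1 - (((r : ℝ) ^ (2 * m) - 1) / (r : ℝ) ^ (2 * m)) ^ n) ^ m := by
        rw [sub_div, div_self (by positivity), one_div]

theorem full_box_prob_lower_bound (n m r : ℕ) (hn : 1 ≤ n) (hm : 1 ≤ m) (hr : 1 ≤ r)
    (hnr : (r : ℝ) ^ (2 * m - 1) ≤ n) (hrm : (m : ℝ) ≤ r) :
    (1 - (((r : ℝ) ^ (2 * m) - 1) / (r : ℝ) ^ (2 * m)) ^ n) ^ m ≥
      (1 / (r : ℝ) ^ m) * (1 - m / (2 * r)) :=
  full_box_prob_lower_bound_general n m r hr hnr
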